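/- arXiv:2407.05622 — 4 statements merged into one kernel-verified Lean document; each statement's English description precedes it below -/
import Mathlib

section
/- The leap complexity is invariant under union closure: for any set system C ⊆ 2^[P] covering [P], if C' is the closure of C under pairwise unions, then Leap(C') = Leap(C). -/
/-!
Every member of `C'` is a finite union of members of `C`, so a covering sequence over `C'` can be
refined into one over `C` by replacing each `U` with the sets it is a union of, listed one after
another. By the key inequality `max(|U₁ \ A|, |U₂ \ (A ∪ U₁)|) ≤ |(U₁ ∪ U₂) \ A|`, this refinement
does not increase any leap; conversely every sequence over `C` is one over `C'`.
-/

open Finset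

/-- Union of the first `i` sets of the list. -/
def prefUnion {P : ℕ} (L : List (Finset (Fin P))) (i : ℕ) : Finset (Fin P) :=
  (L.take i).foldr (· ∪ ·) ∅

/-- `max_i |U_i \ (U_1 ∪ … ∪ U_{i-1})|` for the sequence `L = [U_1, …, U_r]`. -/
def leapVal {P : ℕ} (L : List (Finset (Fin P))) : ℕ :=
  (List.range L.length).foldr (fun i m => max ((L.getD i ∅ \ prefUnion L i).card) m) 0

/-- Leap complexity of a set system `C ⊆ 2^[P]`. -/
noncomputable def Leap {P : ℕ} (C : Set (Finset (Fin P))) : ℕ :=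
  sInf { m | ∃ L : List (Finset (Fin P)),
    (∀ U ∈ L, U ∈ C) ∧ L.foldr (· ∪ ·) ∅ = Finset.univ ∧ leapVal L = m }

/-- Cover complexity of a set system `C ⊆ 2^[P]`. -/
noncomputable def Cover {P : ℕ} (C : Set (Finset (Fin P))) : ℕ :=
  Finset.univ.sup fun i : Fin P => sInf { n | ∃ U ∈ C, i ∈ U ∧ U.card = n }

section Refinement

variable {α : Type*} [DecidableEq α]

def leapFrom (A : Finset α) : List (Finset α) → ℕ
  | [] => 0
  | U :: L => max (U \ A).card (leapFrom (A ∪ U) L)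

lemma foldr_union_append (l₁ l₂ : List (Finset α)) :
    (l₁ ++ l₂).foldr (· ∪ ·) ∅ = l₁.foldr (· ∪ ·) ∅ ∪ l₂.foldr (· ∪ ·) ∅ := by
  induction l₁ with
  | nil => simp
  | cons U l ih => simp [ih, union_assoc]

lemma foldr_union_flatMap {L : List (Finset α)} {parts : Finset α → List (Finset α)}
    (hparts : ∀ U ∈ L, (parts U).foldr (· ∪ ·) ∅ = U) :
    (L.flatMap parts).foldr (· ∪ ·) ∅ = L.foldr (· ∪ ·) ∅ := by
  induction L with
  | nil => rfl
  | cons U L ih =>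
    simp only [List.flatMap_cons, foldr_union_append, List.foldr_cons,
      hparts U List.mem_cons_self, ih fun V hV => hparts V (List.mem_cons_of_mem U hV)]

lemma max_card_sdiff_le_card_union_sdiff (A U V : Finset α) :
    max (U \ A).card (V \ (A ∪ U)).card ≤ ((U ∪ V) \ A).card :=
  max_le (card_le_card (sdiff_subset_sdiff subset_union_left le_rfl))
    (card_le_card fun x hx => by simp only [mem_sdiff, mem_union, not_or] at hx ⊢; tauto)

lemma leapFrom_append_le (A : Finset α) (l L : List (Finset α)) :
    leapFrom A (l ++ L) ≤
      max ((l.foldr (· ∪ ·) ∅ \ A).card) (leapFrom (A ∪ l.foldr (· ∪ ·) ∅) L) := by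
  induction l generalizing A with
  | nil => simp
  | cons V l ih =>
    calc leapFrom A (V :: l ++ L)
        ≤ max (V \ A).card (max ((l.foldr (· ∪ ·) ∅ \ (A ∪ V)).card)
            (leapFrom (A ∪ V ∪ l.foldr (· ∪ ·) ∅) L)) := max_le_max le_rfl (ih (A ∪ V))
      _ = max (max (V \ A).card (l.foldr (· ∪ ·) ∅ \ (A ∪ V)).card)
            (leapFrom (A ∪ (V ∪ l.foldr (· ∪ ·) ∅)) L) := by rw [max_assoc, union_assoc]
      _ ≤ _ := max_le_max (max_card_sdiff_le_card_union_sdiff A V _) le_rfl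

lemma leapFrom_flatMap_le (A : Finset α) {L : List (Finset α)}
    {parts : Finset α → List (Finset α)}
    (hparts : ∀ U ∈ L, (parts U).foldr (· ∪ ·) ∅ = U) :
    leapFrom A (L.flatMap parts) ≤ leapFrom A L := by
  induction L generalizing A with
  | nil => rfl
  | cons U L ih =>
    have hU := hparts U List.mem_cons_self
    calc leapFrom A (parts U ++ L.flatMap parts)
        ≤ max ((U \ A).card) (leapFrom (A ∪ U) (L.flatMap parts)) := by
          simpa only [hU] using leapFrom_append_le A (parts U) (L.flatMap parts)
      _ ≤ leapFrom A (U :: L) :=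
          max_le_max le_rfl (ih (A ∪ U) fun V hV => hparts V (List.mem_cons_of_mem U hV))

def listUnions (C : Set (Finset α)) : Set (Finset α) :=
  {U | ∃ l : List (Finset α), (∀ V ∈ l, V ∈ C) ∧ l.foldr (· ∪ ·) ∅ = U}

lemma subset_listUnions (C : Set (Finset α)) : C ⊆ listUnions C :=
  fun U hU => ⟨[U], by simpa using hU, by simp⟩

lemma union_mem_listUnions {C : Set (Finset α)} :
    ∀ U ∈ listUnions C, ∀ V ∈ listUnions C, U ∪ V ∈ listUnions C := by
  rintro _ ⟨l₁, hl₁, rfl⟩ _ ⟨l₂, hl₂, rfl⟩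
  exact ⟨l₁ ++ l₂, fun V hV => (List.mem_append.1 hV).elim (hl₁ V) (hl₂ V),
    foldr_union_append l₁ l₂⟩

end Refinement

lemma leapFrom_eq_foldr_range {P : ℕ} (L : List (Finset (Fin P))) (A : Finset (Fin P)) :
    leapFrom A L = (List.range L.length).foldr
      (fun i m => max ((L.getD i ∅ \ (A ∪ prefUnion L i)).card) m) 0 := by
  induction L generalizing A with
  | nil => rfl
  | cons U L ih =>
    rw [List.length_cons, List.range_succ_eq_map, List.foldr_cons, List.foldr_map, leapFrom,
      ih (A ∪ U)]
    simp [prefUnion, union_assoc]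

lemma leapVal_eq_leapFrom {P : ℕ} (L : List (Finset (Fin P))) : leapVal L = leapFrom ∅ L := by
  simp only [leapFrom_eq_foldr_range, empty_union, leapVal]

theorem leap_unionClosure_general {P : ℕ} (C C' : Set (Finset (Fin P)))
    (hsub : C ⊆ C')
    (hmin : ∀ D : Set (Finset (Fin P)), C ⊆ D →
      (∀ U ∈ D, ∀ V ∈ D, U ∪ V ∈ D) → C' ⊆ D) :
    Leap C' = Leap C := by
  have hdecomp : ∀ U ∈ C', U ∈ listUnions C := hmin _ (subset_listUnions C) union_mem_listUnions
  choose! parts hparts_mem hparts_union using hdecomp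
  refine csInf_eq_csInf_of_forall_exists_le ?_ ?_
  · rintro _ ⟨L, hLC', hLcov, rfl⟩
    have hL : ∀ U ∈ L, (parts U).foldr (· ∪ ·) ∅ = U := fun U hU => hparts_union U (hLC' U hU)
    refine ⟨_, ⟨L.flatMap parts, fun V hV => ?_, ?_, rfl⟩, ?_⟩
    · obtain ⟨U, hU, hV⟩ := List.mem_flatMap.1 hV
      exact hparts_mem U (hLC' U hU) V hV
    · rw [foldr_union_flatMap hL, hLcov]
    · simpa only [leapVal_eq_leapFrom] using leapFrom_flatMap_le ∅ hL
  · rintro _ ⟨L, hLC, hLcov, rfl⟩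
    exact ⟨_, ⟨L, fun U hU => hsub (hLC U hU), hLcov, rfl⟩, le_rfl⟩

/-- the leap complexity is invariant under union closure. -/
theorem leap_unionClosure {P : ℕ} (hP : 0 < P) (C C' : Set (Finset (Fin P)))
    (hcov : ∀ i : Fin P, ∃ U ∈ C, i ∈ U)
    (hsub : C ⊆ C')
    (hclosed : ∀ U ∈ C', ∀ V ∈ C', U ∪ V ∈ C')
    (hmin : ∀ D : Set (Finset (Fin P)), C ⊆ D →
      (∀ U ∈ D, ∀ V ∈ D, U ∪ V ∈ D) → C' ⊆ D) :
    Leap C' = Leap C :=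
  leap_unionClosure_general C C' hsub hmin
end

section
/- Binary-output identity underlying CSQ = SQ: let (y, z) be a random pair where y takes values in {a, b} ⊆ ℝ and z = (z_1, …, z_P) has independent coordinates given nothing (product marginal), and let T : {a,b} → ℝ and T_i with E[T_i(z_i)] = 0 for each i in a subset U ⊆ [P]. Then E[T(y) ∏_{i∈U} T_i(z_i)] = (T(b) − T(a)) · P(y = b) · E[∏_{i∈U} T_i(z_i) | y = b]. Consequently, if E[T(y) ∏_{i∈U} T_i(z_i)] ≠ 0 for some T, then it is nonzero for T = identity (when a ≠ b). -/
open MeasureTheory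

/- Write `g = ∏_{i ∈ U} T_i(z_i)`. Since `y ∈ {a, b}` almost surely,
`T(y) = T(a) + (T(b) - T(a)) 1_{y = b}`, so `E[T(y) g] = T(a) E[g] + (T(b) - T(a)) E[1_{y = b} g]`.
Because the coordinates of `z` are independent, `E[g] = ∏_{i ∈ U} E[T_i] = 0`. Only the factor
`T(b) - T(a)` then depends on `T`, and it is nonzero for `T = id` as soon as `a ≠ b`. -/

theorem integral_pi_finset_prod_eq_prod {𝕜 ι : Type*} [RCLike 𝕜] [Fintype ι]
    {E : ι → Type*} {mE : ∀ i, MeasurableSpace (E i)} {μ : ∀ i, Measure (E i)}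
    [∀ i, IsProbabilityMeasure (μ i)] (f : ∀ i, E i → 𝕜) (U : Finset ι) :
    ∫ x, ∏ i ∈ U, f i (x i) ∂Measure.pi μ = ∏ i ∈ U, ∫ x, f i x ∂μ i := by
  classical
  have hfactor (i : ι) :
      ∫ x, (if i ∈ U then f i x else 1) ∂μ i = if i ∈ U then ∫ x, f i x ∂μ i else 1 := by
    split_ifs <;> simp
  simpa only [Finset.prod_ite_mem, Finset.univ_inter, hfactor] using
    integral_fintype_prod_eq_prod (μ := μ) fun i x => if i ∈ U then f i x else 1

theorem integral_mul_eq_of_ae_mem_pair {Ω α : Type*} [MeasurableSpace Ω] [MeasurableSpace α]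
    [MeasurableSingletonClass α] {μ : Measure Ω} {Y : Ω → α} (hY : Measurable Y) {a b : α}
    (hab : ∀ᵐ ω ∂μ, Y ω = a ∨ Y ω = b) (S : α → ℝ) {g : Ω → ℝ} (hg : Integrable g μ) :
    ∫ ω, S (Y ω) * g ω ∂μ = S a * ∫ ω, g ω ∂μ + (S b - S a) * ∫ ω in {ω | Y ω = b}, g ω ∂μ := by
  have hb : MeasurableSet {ω | Y ω = b} := hY (measurableSet_singleton b)
  have hsplit : ∀ᵐ ω ∂μ, S (Y ω) * g ω = S a * g ω + (S b - S a) * {ω | Y ω = b}.indicator g ω := by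
    filter_upwards [hab] with ω hω
    by_cases hωb : Y ω = b
    · rw [Set.indicator_of_mem (s := {ω | Y ω = b}) hωb, hωb]
      ring
    · rw [Set.indicator_of_notMem (s := {ω | Y ω = b}) hωb, hω.resolve_right hωb]
      ring
  rw [integral_congr_ae hsplit, integral_add (hg.const_mul _) ((hg.indicator hb).const_mul _),
    integral_const_mul, integral_const_mul, integral_indicator hb]

theorem binary_output_csq_eq_sq_general {X : Type*} [MeasurableSpace X] {P : ℕ}
    (μx : Measure X) [IsProbabilityMeasure μx]
    (μ : Measure (ℝ × (Fin P → X)))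
    (a b : ℝ)
    (hy : ∀ᵐ p ∂μ, p.1 = a ∨ p.1 = b)
    (hmarg : μ.map Prod.snd = Measure.pi fun _ : Fin P => μx)
    (U : Finset (Fin P)) (hU : U.Nonempty)
    (Ti : Fin P → X → ℝ)
    (hTmeas : ∀ i, Measurable (Ti i))
    (hTmean : ∀ i ∈ U, ∫ x, Ti i x ∂μx = 0)
    (T : ℝ → ℝ)
    (hint' : Integrable (fun p => ∏ i ∈ U, Ti i (p.2 i)) μ) :
    (∫ p, T p.1 * ∏ i ∈ U, Ti i (p.2 i) ∂μ
        = (T b - T a) *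
          ∫ p in {p : ℝ × (Fin P → X) | p.1 = b}, ∏ i ∈ U, Ti i (p.2 i) ∂μ) ∧
    (a ≠ b → (∫ p, T p.1 * ∏ i ∈ U, Ti i (p.2 i) ∂μ) ≠ 0 →
        (∫ p, p.1 * ∏ i ∈ U, Ti i (p.2 i) ∂μ) ≠ 0) := by
  have hmean : ∫ p, ∏ i ∈ U, Ti i (p.2 i) ∂μ = 0 := by
    obtain ⟨i₀, hi₀⟩ := hU
    have hmeas : Measurable fun z : Fin P → X => ∏ i ∈ U, Ti i (z i) := by fun_prop
    rw [← integral_map measurable_snd.aemeasurable hmeas.aestronglyMeasurable, hmarg,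
      integral_pi_finset_prod_eq_prod]
    exact Finset.prod_eq_zero hi₀ (hTmean i₀ hi₀)
  have hsplit (S : ℝ → ℝ) : ∫ p, S p.1 * ∏ i ∈ U, Ti i (p.2 i) ∂μ
      = (S b - S a) * ∫ p in {p : ℝ × (Fin P → X) | p.1 = b}, ∏ i ∈ U, Ti i (p.2 i) ∂μ := by
    rw [integral_mul_eq_of_ae_mem_pair measurable_fst hy S hint', hmean, mul_zero, zero_add]
  refine ⟨hsplit T, fun hab hne => ?_⟩
  rw [hsplit T] at hne
  rw [hsplit fun y => y]
  exact mul_ne_zero (sub_ne_zero.2 hab.symm) (right_ne_zero_of_mul hne)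

/-- binary-output identity underlying CSQ = SQ. -/
theorem binary_output_csq_eq_sq {X : Type*} [MeasurableSpace X] {P : ℕ}
    (μx : Measure X) [IsProbabilityMeasure μx]
    (μ : Measure (ℝ × (Fin P → X))) [IsProbabilityMeasure μ]
    (a b : ℝ)
    (hy : ∀ᵐ p ∂μ, p.1 = a ∨ p.1 = b)
    (hmarg : μ.map Prod.snd = Measure.pi fun _ : Fin P => μx)
    (U : Finset (Fin P)) (hU : U.Nonempty)
    (Ti : Fin P → X → ℝ)
    (hTmeas : ∀ i, Measurable (Ti i))
    (hTmean : ∀ i ∈ U, ∫ x, Ti i x ∂μx = 0)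
    (T : ℝ → ℝ)
    (hint : Integrable (fun p => T p.1 * ∏ i ∈ U, Ti i (p.2 i)) μ)
    (hint' : Integrable (fun p => ∏ i ∈ U, Ti i (p.2 i)) μ)
    (hint'' : Integrable (fun p => p.1 * ∏ i ∈ U, Ti i (p.2 i)) μ) :
    (∫ p, T p.1 * ∏ i ∈ U, Ti i (p.2 i) ∂μ
        = (T b - T a) *
          ∫ p in {p : ℝ × (Fin P → X) | p.1 = b}, ∏ i ∈ U, Ti i (p.2 i) ∂μ) ∧
    (a ≠ b → (∫ p, T p.1 * ∏ i ∈ U, Ti i (p.2 i) ∂μ) ≠ 0 →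
        (∫ p, p.1 * ∏ i ∈ U, Ti i (p.2 i) ∂μ) ≠ 0) :=
  binary_output_csq_eq_sq_general μx μ a b hy hmarg U hU Ti hTmeas hTmean T hint'
end

section
/- Let z_1, …, z_P be i.i.d. standard Gaussian random variables, y = z_1 z_2 ⋯ z_P, and τ > 0. Then for each i ∈ [P], E[(z_i² − 1) · 1{|y| ≥ τ}] > 0. -/
/-!
Condition on the coordinates other than `z_i`: their product `c` is almost surely nonzero, and
`τ ≤ |z_i c|` iff `τ / |c| ≤ |z_i|`, so it suffices that `E[(g² - 1) 1{|g| ≥ a}] = 2 a φ(a) > 0`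
for a standard Gaussian `g` with density `φ` and `a > 0`. Since `E[g² - 1] = 0`, this is minus
the integral of `(x² - 1) φ(x)` over `(-a, a)`, and `(x² - 1) φ(x)` is the derivative of `-x φ(x)`.
-/

open MeasureTheory ProbabilityTheory Real Set Filter

lemma MeasureTheory.Integrable.mul_ite_one_zero {α : Type*} [MeasurableSpace α]
    {μ : Measure α} {f : α → ℝ} (hf : Integrable f μ) {p : α → Prop} [DecidablePred p]
    (hp : MeasurableSet {x | p x}) :
    Integrable (fun x ↦ f x * if p x then 1 else 0) μ :=
  hf.mul_bdd (c := 1) (measurable_const.ite hp measurable_const).aestronglyMeasurable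
    (ae_of_all _ fun x ↦ by split_ifs <;> simp)

lemma integral_pos_of_ae_pos {α : Type*} [MeasurableSpace α] {μ : Measure α} [NeZero μ]
    {f : α → ℝ} (hf : Integrable f μ) (hpos : ∀ᵐ x ∂μ, 0 < f x) : 0 < ∫ x, f x ∂μ := by
  rw [integral_pos_iff_support_of_nonneg_ae (hpos.mono fun _ ↦ le_of_lt) hf, pos_iff_ne_zero]
  intro hnull
  have hfalse : ∀ᵐ x ∂μ, False := by
    filter_upwards [hpos, measure_eq_zero_iff_ae_notMem.1 hnull] with x hx hx'
    exact hx' hx.ne'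
  exact NeZero.ne μ (ae_eq_bot.1 (eventually_false_iff_eq_bot.1 hfalse))

lemma integral_prod_pos_of_ae_integral_pos {α β : Type*} [MeasurableSpace α] [MeasurableSpace β]
    {μ : Measure α} {ν : Measure β} [SFinite μ] [SFinite ν] [NeZero ν] {f : α × β → ℝ}
    (hf : Integrable f (μ.prod ν)) (hpos : ∀ᵐ y ∂ν, 0 < ∫ x, f (x, y) ∂μ) :
    0 < ∫ p, f p ∂μ.prod ν := by
  rw [integral_prod_symm f hf]
  exact integral_pos_of_ae_pos hf.integral_prod_right hpos

lemma ae_prod_ne_zero_pi {ι : Type*} [Fintype ι] (μ : Measure ℝ) [SigmaFinite μ]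
    [NullSingletonClass μ] : ∀ᵐ w ∂Measure.pi (fun _ : ι ↦ μ), ∏ k, w k ≠ 0 := by
  filter_upwards [ae_all_iff.2 fun k ↦ Measure.ae_eval_ne _ k 0] with w hw
  exact Finset.prod_ne_zero_iff.2 fun k _ ↦ hw k

lemma gaussianPDFReal_zero_one (x : ℝ) :
    gaussianPDFReal 0 1 x = (√(2 * π))⁻¹ * exp (-x ^ 2 / 2) := by
  simp [gaussianPDFReal]

lemma hasDerivAt_neg_mul_gaussianPDFReal (x : ℝ) :
    HasDerivAt (fun x ↦ -x * gaussianPDFReal 0 1 x) ((x ^ 2 - 1) * gaussianPDFReal 0 1 x) x := by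
  have hexp : HasDerivAt (fun y ↦ exp (-y ^ 2 / 2)) (exp (-x ^ 2 / 2) * (-x)) x :=
    ((hasDerivAt_pow 2 x).fun_neg.div_const 2).exp.congr_deriv (by ring)
  simp only [gaussianPDFReal_zero_one]
  exact ((hasDerivAt_neg' (x := x)).fun_mul (hexp.const_mul (√(2 * π))⁻¹)).congr_deriv (by ring)

lemma integrable_sq_gaussianReal : Integrable (fun x : ℝ ↦ x ^ 2) (gaussianReal 0 1) :=
  (memLp_id_gaussianReal 2).integrable_sq

lemma integrable_sq_sub_one_gaussianReal :
    Integrable (fun x : ℝ ↦ x ^ 2 - 1) (gaussianReal 0 1) :=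
  integrable_sq_gaussianReal.sub (integrable_const 1)

lemma integral_sq_sub_one_gaussianReal : ∫ x, (x ^ 2 - 1) ∂gaussianReal 0 1 = 0 := by
  have hsq : ∫ x, x ^ 2 ∂gaussianReal 0 1 = 1 := by
    have := variance_of_integral_eq_zero measurable_id.aemeasurable
      (integral_id_gaussianReal (μ := 0) (v := 1))
    rw [variance_id_gaussianReal] at this
    simpa using this.symm
  rw [integral_sub integrable_sq_gaussianReal (integrable_const 1), hsq]
  simp

lemma integral_gaussianReal_sq_sub_one_mul_ite_abs_lt {a : ℝ} (ha : 0 ≤ a) :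
    ∫ x, (x ^ 2 - 1) * (if |x| < a then 1 else 0) ∂gaussianReal 0 1
      = -(2 * a * gaussianPDFReal 0 1 a) := by
  have hind : (fun x ↦ gaussianPDFReal 0 1 x • ((x ^ 2 - 1) * if |x| < a then 1 else 0))
      = (Ioo (-a) a).indicator fun x ↦ (x ^ 2 - 1) * gaussianPDFReal 0 1 x := by
    ext x
    simp only [indicator_apply, mem_Ioo, ← abs_lt, smul_eq_mul]
    split_ifs <;> ring
  have hcont : Continuous fun x ↦ (x ^ 2 - 1) * gaussianPDFReal 0 1 x := by
    simp only [gaussianPDFReal_zero_one]; fun_prop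
  rw [integral_gaussianReal_eq_integral_smul one_ne_zero, hind,
    integral_indicator measurableSet_Ioo, ← integral_Ioc_eq_integral_Ioo,
    ← intervalIntegral.integral_of_le (by linarith),
    intervalIntegral.integral_eq_sub_of_hasDerivAt
      (fun x _ ↦ hasDerivAt_neg_mul_gaussianPDFReal x) (hcont.intervalIntegrable _ _)]
  simp only [gaussianPDFReal_zero_one, even_two, Even.neg_pow]
  ring

lemma integral_gaussianReal_sq_sub_one_mul_ite_le_abs {a : ℝ} (ha : 0 ≤ a) :
    ∫ x, (x ^ 2 - 1) * (if a ≤ |x| then 1 else 0) ∂gaussianReal 0 1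
      = 2 * a * gaussianPDFReal 0 1 a := by
  have hsplit : (fun x : ℝ ↦ (x ^ 2 - 1) * if a ≤ |x| then 1 else 0)
      = fun x ↦ (x ^ 2 - 1) - (x ^ 2 - 1) * if |x| < a then 1 else 0 := by
    ext x
    by_cases h : a ≤ |x|
    · simp [h, not_lt.2 h]
    · simp [h, lt_of_not_ge h]
  rw [hsplit, integral_sub integrable_sq_sub_one_gaussianReal
    (integrable_sq_sub_one_gaussianReal.mul_ite_one_zero
      (measurableSet_lt (by fun_prop) measurable_const)),
    integral_sq_sub_one_gaussianReal, integral_gaussianReal_sq_sub_one_mul_ite_abs_lt ha]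
  ring

lemma integral_gaussianReal_sq_sub_one_mul_ite_le_abs_mul_pos {τ c : ℝ} (hτ : 0 < τ)
    (hc : c ≠ 0) :
    0 < ∫ x, (x ^ 2 - 1) * (if τ ≤ |x * c| then 1 else 0) ∂gaussianReal 0 1 := by
  have hc' : 0 < |c| := abs_pos.2 hc
  have hiff (x : ℝ) : τ ≤ |x * c| ↔ τ / |c| ≤ |x| := by rw [abs_mul, div_le_iff₀ hc']
  simp_rw [hiff, integral_gaussianReal_sq_sub_one_mul_ite_le_abs (div_pos hτ hc').le]
  have := gaussianPDFReal_pos 0 1 (τ / |c|) one_ne_zero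
  positivity

/-- for i.i.d. standard Gaussians `z_1,…,z_P`, `y = ∏ z_j` and
any `τ > 0`, `E[(z_i² − 1)·1{|y| ≥ τ}] > 0`. -/
theorem gaussian_parity_sq_detectable {P : ℕ} (i : Fin P) (τ : ℝ) (hτ : 0 < τ) :
    0 < ∫ z : Fin P → ℝ,
        (z i ^ 2 - 1) * (if τ ≤ |∏ j, z j| then (1 : ℝ) else 0)
        ∂(Measure.pi fun _ : Fin P => gaussianReal 0 1) := by
  obtain ⟨n, rfl⟩ := Nat.exists_eq_add_one_of_ne_zero i.pos.ne'
  rw [← (measurePreserving_piFinSuccAbove (fun _ ↦ gaussianReal 0 1) i).symm.integral_comp']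
  simp only [MeasurableEquiv.piFinSuccAbove_symm_apply, Fin.insertNthEquiv_apply,
    Fin.insertNth_apply_same, Fin.prod_insertNth]
  refine integral_prod_pos_of_ae_integral_pos ?_ ?_
  · exact (integrable_sq_sub_one_gaussianReal.comp_fst _).mul_ite_one_zero
      (measurableSet_le measurable_const (by fun_prop))
  · have := nullSingletonClass_gaussianReal (μ := 0) one_ne_zero
    filter_upwards [ae_prod_ne_zero_pi (gaussianReal 0 1)] with w hw
    exact integral_gaussianReal_sq_sub_one_mul_ite_le_abs_mul_pos hτ hw
end

section
/- Span of exponential-loss gradients approximates monomials: let μ be a probability measure on [−M, M] ⊂ ℝ. Then the closed linear span in L²(μ) of the family {y ↦ y e^{−u y} : u ∈ ℝ} contains every monomial y ↦ y^k (k ≥ 1), and hence is dense in the closed span of {y ↦ y^k : k ≥ 1} ∪ {1} minus constants; in particular, span{y ↦ y e^{−uy}} ∪ {constants} is dense in L²(μ). -/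
/-!
The functions `e^{-u f}` on a compact space form a multiplicatively closed family containing the
injective function `e^{-f}`, so by Stone–Weierstrass their span is dense in `C(X, ℝ)`.
Multiplication by `f` is continuous, hence the closure of the span of the `f e^{-u f}` contains
`f * C(X, ℝ)`, in particular every `f ^ (k + 1)`. Every polynomial in `f` is a constant plus `f`
times a polynomial, so constants together with that span are dense as well. For `f = id` on
`[-M, M]`, uniform approximation on the support of `μ` bounds the `L²(μ)` distance, and continuous
functions are dense in `L²(μ)`.
-/

open MeasureTheory Set Submodule

theorem Submodule.exists_fin_sum_smul_eq_of_mem_span_range {R M ι : Type*} [Semiring R]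
    [AddCommMonoid M] [Module R M] {v : ι → M} {x : M} (hx : x ∈ span R (range v)) :
    ∃ (n : ℕ) (c : Fin n → R) (i : Fin n → ι), ∑ k, c k • v (i k) = x := by
  obtain ⟨n, c, g, rfl⟩ := mem_span_set'.1 hx
  choose i hi using fun k => (g k).2
  exact ⟨n, c, i, by simp only [hi]⟩

theorem Algebra.adjoin_singleton_le_span_one_sup_range_mulLeft {R A : Type*} [CommSemiring R]
    [CommSemiring A] [Algebra R A] (a : A) :
    Subalgebra.toSubmodule (Algebra.adjoin R {a}) ≤
      span R {1} ⊔ LinearMap.range (LinearMap.mulLeft R a) := by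
  rw [Algebra.adjoin_singleton_eq_range_aeval]
  rintro _ ⟨p, rfl⟩
  change Polynomial.aeval a p ∈ _
  rw [← Polynomial.X_mul_divX_add p, map_add, map_mul, Polynomial.aeval_X, Polynomial.aeval_C,
    Algebra.algebraMap_eq_smul_one]
  exact add_mem (Submodule.mem_sup_right ⟨_, rfl⟩)
    (Submodule.mem_sup_left (smul_mem _ _ (mem_span_singleton_self 1)))

namespace ContinuousMap

variable {X : Type*} [TopologicalSpace X]

theorem toSubmodule_topologicalClosure_eq_top_of_injective_mem [CompactSpace X]
    {A : Subalgebra ℝ C(X, ℝ)} {f : C(X, ℝ)} (hf : Function.Injective f) (hfA : f ∈ A) :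
    (Subalgebra.toSubmodule A).topologicalClosure = ⊤ :=
  congrArg Subalgebra.toSubmodule <| subalgebra_topologicalClosure_eq_top_of_separatesPoints A
    fun _ _ hxy => ⟨f, ⟨f, hfA, rfl⟩, hf.ne hxy⟩

variable (f : C(X, ℝ))

noncomputable def expTilt (u : ℝ) : C(X, ℝ) := ⟨fun x => Real.exp (-u * f x), by fun_prop⟩

theorem expTilt_zero : expTilt f 0 = 1 := by ext; simp [expTilt]

theorem expTilt_add (u v : ℝ) : expTilt f (u + v) = expTilt f u * expTilt f v := by
  ext; simp only [expTilt, coe_mk, mul_apply, ← Real.exp_add]; ring_nf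

theorem toSubmodule_adjoin_range_expTilt :
    Subalgebra.toSubmodule (Algebra.adjoin ℝ (range (expTilt f))) = span ℝ (range (expTilt f)) := by
  refine Algebra.adjoin_eq_span_of_subset ℝ (Subset.trans ?_ subset_span)
  intro g hg
  refine Submonoid.closure_induction (fun _ => id) ⟨0, expTilt_zero f⟩ ?_ hg
  rintro - - - - ⟨u, rfl⟩ ⟨v, rfl⟩
  exact ⟨u + v, expTilt_add f u v⟩

variable {f} [CompactSpace X]

theorem topologicalClosure_span_range_expTilt (hf : Function.Injective f) :
    (span ℝ (range (expTilt f))).topologicalClosure = ⊤ := by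
  have hinj : Function.Injective (expTilt f 1) := fun x y h => hf (by simpa [expTilt] using h)
  rw [← toSubmodule_adjoin_range_expTilt]
  exact toSubmodule_topologicalClosure_eq_top_of_injective_mem hinj (Algebra.subset_adjoin ⟨1, rfl⟩)

def expLossGradSpan (f : C(X, ℝ)) : Submodule ℝ C(X, ℝ) :=
  span ℝ (range fun u => f * expTilt f u)

theorem range_mulLeft_le_topologicalClosure_expLossGradSpan (hf : Function.Injective f) :
    LinearMap.range (LinearMap.mulLeft ℝ f) ≤ (expLossGradSpan f).topologicalClosure := by
  have hmap : expLossGradSpan f = (span ℝ (range (expTilt f))).map (LinearMap.mulLeft ℝ f) := by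
    rw [map_span, ← range_comp]; rfl
  rw [hmap, LinearMap.range_eq_map, ← topologicalClosure_span_range_expTilt hf]
  exact topologicalClosure_map (ContinuousLinearMap.mul ℝ _ f) _

theorem pow_succ_mem_topologicalClosure_expLossGradSpan (hf : Function.Injective f) (k : ℕ) :
    f ^ (k + 1) ∈ (expLossGradSpan f).topologicalClosure :=
  range_mulLeft_le_topologicalClosure_expLossGradSpan hf ⟨f ^ k, (pow_succ' f k).symm⟩

theorem topologicalClosure_span_one_sup_expLossGradSpan (hf : Function.Injective f) :
    (span ℝ {1} ⊔ expLossGradSpan f).topologicalClosure = ⊤ := by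
  refine eq_top_iff.2 ?_
  calc ⊤ = (Subalgebra.toSubmodule (Algebra.adjoin ℝ {f})).topologicalClosure :=
        (toSubmodule_topologicalClosure_eq_top_of_injective_mem hf
          (Algebra.self_mem_adjoin_singleton ℝ f)).symm
    _ ≤ (span ℝ {1} ⊔ LinearMap.range (LinearMap.mulLeft ℝ f)).topologicalClosure :=
        topologicalClosure_mono (Algebra.adjoin_singleton_le_span_one_sup_range_mulLeft f)
    _ ≤ _ := topologicalClosure_minimal _ (sup_le (le_sup_left.trans (le_topologicalClosure _))
        ((range_mulLeft_le_topologicalClosure_expLossGradSpan hf).trans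
          (topologicalClosure_mono le_sup_right))) (isClosed_topologicalClosure _)

end ContinuousMap

open ContinuousMap

section CompactSubsetReal

variable {s : Set ℝ}

theorem exists_sum_mul_exp_approx_pow_succ (hs : IsCompact s) (k : ℕ) {δ : ℝ} (hδ : 0 < δ) :
    ∃ (m : ℕ) (c u : Fin m → ℝ), ∀ y ∈ s,
      |y ^ (k + 1) - ∑ i, c i * (y * Real.exp (-(u i) * y))| ≤ δ := by
  have := isCompact_iff_compactSpace.mp hs
  obtain ⟨F, hF, hFδ⟩ := Metric.mem_closure_iff.1
    (pow_succ_mem_topologicalClosure_expLossGradSpan (f := (ContinuousMap.id ℝ).restrict s)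
      Subtype.val_injective k) δ hδ
  obtain ⟨m, c, u, rfl⟩ := exists_fin_sum_smul_eq_of_mem_span_range hF
  refine ⟨m, c, u, fun y hy => ?_⟩
  simpa [expTilt, Real.dist_eq] using (dist_apply_le_dist ⟨y, hy⟩).trans hFδ.le

theorem exists_const_add_sum_mul_exp_approx (hs : IsCompact s) (g : C(ℝ, ℝ))
    {δ : ℝ} (hδ : 0 < δ) :
    ∃ (m : ℕ) (c u : Fin m → ℝ) (c₀ : ℝ), ∀ y ∈ s,
      |g y - (c₀ + ∑ i, c i * (y * Real.exp (-(u i) * y)))| ≤ δ := by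
  have := isCompact_iff_compactSpace.mp hs
  have hgS : g.restrict s ∈
      (span ℝ {1} ⊔ expLossGradSpan ((ContinuousMap.id ℝ).restrict s)).topologicalClosure := by
    rw [topologicalClosure_span_one_sup_expLossGradSpan Subtype.val_injective]; trivial
  obtain ⟨F, hF, hFδ⟩ := Metric.mem_closure_iff.1 hgS δ hδ
  obtain ⟨_, hc₀, _, hv, rfl⟩ := mem_sup.1 hF
  obtain ⟨c₀, rfl⟩ := mem_span_singleton.1 hc₀
  obtain ⟨m, c, u, rfl⟩ := exists_fin_sum_smul_eq_of_mem_span_range hv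
  refine ⟨m, c, u, c₀, fun y hy => ?_⟩
  simpa [expTilt, Real.dist_eq] using (dist_apply_le_dist ⟨y, hy⟩).trans hFδ.le

end CompactSubsetReal

section ProbabilityMeasure

variable {α E : Type*} [MeasurableSpace α] [NormedAddCommGroup E] {μ : Measure α}
  [IsProbabilityMeasure μ] {s : Set α}

theorem eLpNorm_le_ofReal_of_forall_mem (hs : ∀ᵐ x ∂μ, x ∈ s) {φ : α → E} {δ : ℝ}
    (hφ : ∀ x ∈ s, ‖φ x‖ ≤ δ) (p : ENNReal) : eLpNorm φ p μ ≤ ENNReal.ofReal δ := by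
  simpa using eLpNorm_le_of_ae_bound (p := p) (hs.mono hφ)

theorem eLpNorm_sub_le_eLpNorm_sub_add_ofReal (hs : ∀ᵐ x ∂μ, x ∈ s) {g h φ : α → E}
    (hg : AEStronglyMeasurable g μ) (hh : AEStronglyMeasurable h μ) (hφ : AEStronglyMeasurable φ μ)
    {p : ENNReal} (hp : 1 ≤ p) {δ : ℝ} (hhφ : ∀ x ∈ s, ‖h x - φ x‖ ≤ δ) :
    eLpNorm (fun x => g x - φ x) p μ ≤ eLpNorm (fun x => g x - h x) p μ + ENNReal.ofReal δ := by
  calc eLpNorm (fun x => g x - φ x) p μ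
      = eLpNorm ((fun x => g x - h x) + fun x => h x - φ x) p μ := by congr 1; ext x; simp
    _ ≤ eLpNorm (fun x => g x - h x) p μ + eLpNorm (fun x => h x - φ x) p μ :=
      eLpNorm_add_le (hg.sub hh) (hh.sub hφ) hp
    _ ≤ _ := by grw [eLpNorm_le_ofReal_of_forall_mem hs hhφ p]

end ProbabilityMeasure

theorem exp_loss_gradients_dense_general (M : ℝ)
    (μ : Measure ℝ) [IsProbabilityMeasure μ]
    (hsupp : ∀ᵐ y ∂μ, y ∈ Set.Icc (-M) M) :
    (∀ k : ℕ, 1 ≤ k → ∀ ε > (0 : ℝ), ∃ (m : ℕ) (c u : Fin m → ℝ),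
        eLpNorm (fun y : ℝ => y ^ k - ∑ i, c i * (y * Real.exp (-(u i) * y))) 2 μ
          < ENNReal.ofReal ε) ∧
    (∀ g : ℝ → ℝ, MemLp g 2 μ → ∀ ε > (0 : ℝ),
        ∃ (m : ℕ) (c u : Fin m → ℝ) (c₀ : ℝ),
        eLpNorm (fun y : ℝ =>
            g y - (c₀ + ∑ i, c i * (y * Real.exp (-(u i) * y)))) 2 μ
          < ENNReal.ofReal ε) := by
  refine ⟨fun k hk ε hε => ?_, fun g hg ε hε => ?_⟩
  · obtain ⟨k, rfl⟩ := Nat.exists_eq_add_of_le' hk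
    obtain ⟨m, c, u, happrox⟩ := exists_sum_mul_exp_approx_pow_succ isCompact_Icc k (half_pos hε)
    exact ⟨m, c, u, (eLpNorm_le_ofReal_of_forall_mem hsupp happrox 2).trans_lt
      ((ENNReal.ofReal_lt_ofReal_iff hε).2 (half_lt_self hε))⟩
  · have hε3 : 0 < ε / 3 := by positivity
    obtain ⟨h, hgh, -⟩ := hg.exists_boundedContinuous_eLpNorm_sub_le (by norm_num)
      (ENNReal.ofReal_pos.2 hε3).ne'
    obtain ⟨m, c, u, c₀, happrox⟩ :=
      exists_const_add_sum_mul_exp_approx isCompact_Icc h.toContinuousMap hε3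
    refine ⟨m, c, u, c₀, (eLpNorm_sub_le_eLpNorm_sub_add_ofReal hsupp hg.1
      h.continuous.aestronglyMeasurable ?_ one_le_two happrox).trans_lt ?_⟩
    · exact Continuous.aestronglyMeasurable (by fun_prop)
    · calc eLpNorm (fun y => g y - h y) 2 μ + ENNReal.ofReal (ε / 3)
          ≤ ENNReal.ofReal (ε / 3) + ENNReal.ofReal (ε / 3) := by gcongr; exact hgh
        _ < ENNReal.ofReal ε := by
          rw [← ENNReal.ofReal_add hε3.le hε3.le, ENNReal.ofReal_lt_ofReal_iff hε]
          linarith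

/-- for a probability measure on `[-M,M]`, the closed span in
`L²(μ)` of `{y ↦ y e^{-uy}}` contains every monomial `y^k` (`k ≥ 1`), and
together with constants it is dense in `L²(μ)`. -/
theorem exp_loss_gradients_dense (M : ℝ) (hM : 0 < M)
    (μ : Measure ℝ) [IsProbabilityMeasure μ]
    (hsupp : ∀ᵐ y ∂μ, y ∈ Set.Icc (-M) M) :
    (∀ k : ℕ, 1 ≤ k → ∀ ε > (0 : ℝ), ∃ (m : ℕ) (c u : Fin m → ℝ),
        eLpNorm (fun y : ℝ => y ^ k - ∑ i, c i * (y * Real.exp (-(u i) * y))) 2 μ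
          < ENNReal.ofReal ε) ∧
    (∀ g : ℝ → ℝ, MemLp g 2 μ → ∀ ε > (0 : ℝ),
        ∃ (m : ℕ) (c u : Fin m → ℝ) (c₀ : ℝ),
        eLpNorm (fun y : ℝ =>
            g y - (c₀ + ∑ i, c i * (y * Real.exp (-(u i) * y)))) 2 μ
          < ENNReal.ofReal ε) :=
  exp_loss_gradients_dense_general M μ hsupp
end
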